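/- Define the endomorphism J_{E₀} on sections of E₀ by J_{E₀}(X₁^i) = −X₂^i and J_{E₀}(X₂^i) = X₁^i for i ∈ {1,2}, extended C^∞(ℝ²)-linearly. Then J_{E₀}² = −id, and the Nijenhuis tensor N(X,Y) = [J_{E₀}X, J_{E₀}Y]_{E₀} − J_{E₀}[X, J_{E₀}Y]_{E₀} − J_{E₀}[J_{E₀}X, Y]_{E₀} − [X,Y]_{E₀} vanishes identically: N(X,Y) = 0 for all sections X, Y of E₀. That is, the almost complex structure J_{E₀} on the almost Lie algebroid E₀ is integrable. -/

import Mathlib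

noncomputable section

set_option maxHeartbeats 1000000
set_option synthInstance.maxHeartbeats 400000

open Matrix

/-- The ℝ-algebra of smooth (C^∞) functions on ℝ². -/
def Sm : Subalgebra ℝ ((ℝ × ℝ) → ℝ) where
  carrier := {f | ContDiff ℝ (⊤ : ℕ∞) f}
  mul_mem' := fun {a b} (hf : ContDiff ℝ (⊤ : ℕ∞) a) (hg : ContDiff ℝ (⊤ : ℕ∞) b) => hf.mul hg
  add_mem' := fun {a b} (hf : ContDiff ℝ (⊤ : ℕ∞) a) (hg : ContDiff ℝ (⊤ : ℕ∞) b) => hf.add hg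
  algebraMap_mem' r :=
    show ContDiff ℝ (⊤ : ℕ∞) (algebraMap ℝ ((ℝ × ℝ) → ℝ) r) from contDiff_const

/-- Smooth functions on the plane. -/
abbrev S : Type := Sm

lemma mem_Sm_iff {f : (ℝ × ℝ) → ℝ} : f ∈ Sm ↔ ContDiff ℝ (⊤ : ℕ∞) f := by
  rw [Sm]; rfl

lemma smooth_coe (f : S) : ContDiff ℝ (⊤ : ℕ∞) (f : (ℝ × ℝ) → ℝ) := mem_Sm_iff.mp f.2

/-- Sections of the trivial bundle `ℝ² × M₂(ℝ)`, as 2×2 matrices of smooth functions. -/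
abbrev E₀ : Type := Matrix (Fin 2) (Fin 2) S

/-- The section `X_j^i`: the constant elementary matrix with 1 in entry (i,j). -/
def sb (i j : Fin 2) : E₀ := Matrix.single i j 1

/-- First coordinate function. -/
def x₁ : S := ⟨fun p => p.1, mem_Sm_iff.mpr contDiff_fst⟩
/-- Second coordinate function. -/
def x₂ : S := ⟨fun p => p.2, mem_Sm_iff.mpr contDiff_snd⟩
/-- Coordinates. -/
def xc : Fin 2 → S := ![x₁, x₂]

/-- Directional derivative of a smooth function, in direction `v`. -/
def pdAux (v : ℝ × ℝ) (f : S) : S :=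
  ⟨fun p => fderiv ℝ (f : (ℝ × ℝ) → ℝ) p v,
    mem_Sm_iff.mpr (((smooth_coe f).fderiv_right (le_refl _)).clm_apply contDiff_const)⟩

/-- The vector field (derivation) `∂/∂v` on `ℝ²`. -/
def pd (v : ℝ × ℝ) : Derivation ℝ S S where
  toFun := pdAux v
  map_add' f g := by
    ext p
    have hf : DifferentiableAt ℝ (f : (ℝ × ℝ) → ℝ) p :=
      ((smooth_coe f).differentiable (by simp)).differentiableAt
    have hg : DifferentiableAt ℝ (g : (ℝ × ℝ) → ℝ) p :=
      ((smooth_coe g).differentiable (by simp)).differentiableAt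
    have h1 : ((f + g : S) : (ℝ × ℝ) → ℝ) = fun q => (f : (ℝ × ℝ) → ℝ) q + (g : (ℝ × ℝ) → ℝ) q := rfl
    simp only [pdAux, h1, AddMemClass.coe_add, Pi.add_apply]
    rw [show (fun q => (f : (ℝ × ℝ) → ℝ) q + (g : (ℝ × ℝ) → ℝ) q) = (f : (ℝ × ℝ) → ℝ) + (g : (ℝ × ℝ) → ℝ) from rfl, fderiv_add hf hg]
    simp
  map_smul' c f := by
    ext p
    have h1 : ((c • f : S) : (ℝ × ℝ) → ℝ) = fun q => c * (f : (ℝ × ℝ) → ℝ) q := rfl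
    have hf : DifferentiableAt ℝ (f : (ℝ × ℝ) → ℝ) p :=
      ((smooth_coe f).differentiable (by simp)).differentiableAt
    simp only [pdAux]
    rw [h1, fderiv_const_mul hf]
    simp
  map_one_eq_zero' := by
    ext p
    have h1 : ((1 : S) : (ℝ × ℝ) → ℝ) = fun _ => (1 : ℝ) := rfl
    have h2 : fderiv ℝ (1 : (ℝ × ℝ) → ℝ) p = 0 := fderiv_const_apply 1
    simp [pdAux, h1, h2]
  leibniz' f g := by
    ext p
    have hf : DifferentiableAt ℝ (f : (ℝ × ℝ) → ℝ) p :=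
      ((smooth_coe f).differentiable (by simp)).differentiableAt
    have hg : DifferentiableAt ℝ (g : (ℝ × ℝ) → ℝ) p :=
      ((smooth_coe g).differentiable (by simp)).differentiableAt
    have h1 : ((f * g : S) : (ℝ × ℝ) → ℝ) = fun q => (f : (ℝ × ℝ) → ℝ) q * (g : (ℝ × ℝ) → ℝ) q := rfl
    simp [pdAux, h1, fderiv_mul hf hg]
    rw [show (fun q => (f : (ℝ × ℝ) → ℝ) q * (g : (ℝ × ℝ) → ℝ) q) = (f : (ℝ × ℝ) → ℝ) * (g : (ℝ × ℝ) → ℝ) from rfl, fderiv_mul hf hg]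
    simp
    try ring

/-- Standard basis vectors of ℝ². -/
def ev : Fin 2 → ℝ × ℝ := ![(1, 0), (0, 1)]

/-- The anchor `ρ` of `E₀`: `ρ(X_j^i) = (x^i)² ∂/∂x^j`, extended `C^∞(ℝ²)`-linearly. -/
def anchor (X : E₀) : Derivation ℝ S S :=
  ∑ i : Fin 2, ∑ j : Fin 2, (X i j * xc i ^ 2) • pd (ev j)

/-- The section `𝒳₁ = (x²)² X₁¹ − (x¹)² X₁²`. -/
def 𝓧₁ : E₀ := x₂ ^ 2 • sb 0 0 - x₁ ^ 2 • sb 1 0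
/-- The section `𝒳₂ = (x²)² X₂¹ − (x¹)² X₂²`. -/
def 𝓧₂ : E₀ := x₂ ^ 2 • sb 0 1 - x₁ ^ 2 • sb 1 1

/-- The almost Lie bracket axioms for `(E₀, ρ)`, together with the defining values
`[X_j^i, X_l^k] = 2x^k δ_j^k X_l^i − 2x^i δ_l^i X_j^k` on the generators: ℝ-bilinearity,
skew-symmetry, the Leibniz rule, and the values on generators. -/
def IsBracket (L : E₀ → E₀ → E₀) : Prop :=
  (∀ X X' Y, L (X + X') Y = L X Y + L X' Y) ∧
  (∀ X Y Y', L X (Y + Y') = L X Y + L X Y') ∧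
  (∀ (c : ℝ) (X Y : E₀), L (c • X) Y = c • L X Y) ∧
  (∀ (c : ℝ) (X Y : E₀), L X (c • Y) = c • L X Y) ∧
  (∀ X Y, L Y X = - L X Y) ∧
  (∀ (f : S) (X Y : E₀), L X (f • Y) = anchor X f • Y + f • L X Y) ∧
  (∀ i j k l, L (sb i j) (sb k l) =
    (if j = k then (2 : S) * xc k else 0) • sb i l
      - (if l = i then (2 : S) * xc i else 0) • sb k j)


/-- The almost complex endomorphism `J_{E₀}`: `J(X₁^i) = −X₂^i`, `J(X₂^i) = X₁^i`,
extended `C^∞(ℝ²)`-linearly. -/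
def Jm (X : E₀) : E₀ := Matrix.of fun i j => if j = 0 then X i 1 else - X i 0

/-!
Skew-symmetry and the Leibniz rule make the Nijenhuis tensor `N` of any `C^∞`-linear `J` with
`J² = -1` tensorial: in `N(X, fY)` the anchor terms are `ρ(JX)f · JY - ρ(JX)f · JY` and
`-ρ(X)f · J²Y - ρ(X)f · Y`, which cancel. So `N` is `C^∞(ℝ²)`-bilinear and it suffices to check
that it vanishes on the basis `X_j^i`, a finite computation with the structure constants
`[X_j^i, X_l^k] = 2x^k δ_j^k X_l^i − 2x^i δ_l^i X_j^k`.
-/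

section Nijenhuis

variable {R M : Type*} [CommRing R] [AddCommGroup M] [Module R M]

def nijenhuis (L : M → M → M) (J : M →ₗ[R] M) (X Y : M) : M :=
  L (J X) (J Y) - J (L X (J Y)) - J (L (J X) Y) - L X Y

variable {L : M → M → M} {J : M →ₗ[R] M}

theorem nijenhuis_swap (hskew : ∀ X Y, L Y X = -L X Y) (X Y : M) :
    nijenhuis L J Y X = -nijenhuis L J X Y := by
  simp only [nijenhuis, hskew Y, hskew (J Y), map_neg]
  abel

theorem nijenhuis_add_right (hadd : ∀ X Y Y', L X (Y + Y') = L X Y + L X Y') (X Y Y' : M) :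
    nijenhuis L J X (Y + Y') = nijenhuis L J X Y + nijenhuis L J X Y' := by
  simp only [nijenhuis, map_add, hadd]
  abel

theorem nijenhuis_smul_right (ρ : M → R → R)
    (hleib : ∀ (f : R) X Y, L X (f • Y) = ρ X f • Y + f • L X Y)
    (hJ : ∀ X, J (J X) = -X) (f : R) (X Y : M) :
    nijenhuis L J X (f • Y) = f • nijenhuis L J X Y := by
  simp only [nijenhuis, map_smul, hleib, map_add, hJ, smul_neg, smul_sub]
  abel

def nijenhuisBilin (ρ : M → R → R) (hadd : ∀ X Y Y', L X (Y + Y') = L X Y + L X Y')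
    (hskew : ∀ X Y, L Y X = -L X Y)
    (hleib : ∀ (f : R) X Y, L X (f • Y) = ρ X f • Y + f • L X Y)
    (hJ : ∀ X, J (J X) = -X) : M →ₗ[R] M →ₗ[R] M :=
  LinearMap.mk₂ R (nijenhuis L J)
    (fun X X' Y => by
      rw [nijenhuis_swap hskew, nijenhuis_add_right hadd, nijenhuis_swap hskew X,
        nijenhuis_swap hskew X', neg_add, neg_neg, neg_neg])
    (fun f X Y => by
      rw [nijenhuis_swap hskew, nijenhuis_smul_right ρ hleib hJ, nijenhuis_swap hskew X,
        smul_neg, neg_neg])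
    (nijenhuis_add_right hadd) (nijenhuis_smul_right ρ hleib hJ)

theorem nijenhuis_eq_zero_of_basis {ι : Type*} (b : Module.Basis ι R M) (ρ : M → R → R)
    (hadd : ∀ X Y Y', L X (Y + Y') = L X Y + L X Y') (hskew : ∀ X Y, L Y X = -L X Y)
    (hleib : ∀ (f : R) X Y, L X (f • Y) = ρ X f • Y + f • L X Y)
    (hJ : ∀ X, J (J X) = -X) (hb : ∀ i j, nijenhuis L J (b i) (b j) = 0) (X Y : M) :
    nijenhuis L J X Y = 0 := by
  have h : nijenhuisBilin ρ hadd hskew hleib hJ = 0 := LinearMap.ext_basis b b hb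
  exact LinearMap.congr_fun₂ h X Y

end Nijenhuis

def Jmₗ : E₀ →ₗ[S] E₀ where
  toFun := Jm
  map_add' X Y := by
    ext a b : 1
    simp only [Jm, of_apply, Matrix.add_apply]
    split_ifs <;> ring
  map_smul' f X := by
    ext a b : 1
    simp only [Jm, of_apply, Matrix.smul_apply, smul_eq_mul, RingHom.id_apply]
    split_ifs <;> ring

theorem Jm_Jm (X : E₀) : Jm (Jm X) = -X := by
  ext a b
  fin_cases b <;> simp [Jm]

theorem Jmₗ_sb_zero (i : Fin 2) : Jmₗ (sb i 0) = -sb i 1 := by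
  ext a b
  fin_cases b <;> simp [Jmₗ, Jm, sb, Matrix.single]

theorem Jmₗ_sb_one (i : Fin 2) : Jmₗ (sb i 1) = sb i 0 := by
  ext a b
  fin_cases b <;> simp [Jmₗ, Jm, sb, Matrix.single]

theorem nijenhuis_sb {L : E₀ → E₀ → E₀} (hL : IsBracket L) (i j k l : Fin 2) :
    nijenhuis L Jmₗ (sb i j) (sb k l) = 0 := by
  obtain ⟨-, hadd, -, -, hskew, -, hgen⟩ := hL
  have neg_right (X Y : E₀) : L X (-Y) = -L X Y :=
    (AddMonoidHom.mk' (L X) (hadd X)).map_neg Y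
  have neg_left (X Y : E₀) : L (-X) Y = -L X Y := by
    rw [hskew, neg_right, neg_neg, hskew]
  fin_cases j <;> fin_cases l <;>
    simp only [nijenhuis, Fin.zero_eta, Fin.mk_one, Jmₗ_sb_zero, Jmₗ_sb_one, neg_left, neg_right,
      hgen, map_neg, map_sub, map_smul, smul_neg] <;>
    abel

/-- `J_{E₀}² = −id` and the Nijenhuis tensor of `J_{E₀}` with respect to the
bracket `[·,·]_{E₀}` vanishes identically, i.e. the almost complex structure `J_{E₀}` on the
almost Lie algebroid `E₀` is integrable. -/
theorem statement16 (L : E₀ → E₀ → E₀) (hL : IsBracket L) :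
    (∀ X : E₀, Jm (Jm X) = - X) ∧
    (∀ X Y : E₀, L (Jm X) (Jm Y) - Jm (L X (Jm Y)) - Jm (L (Jm X) Y) - L X Y = 0) := by
  have hgen : ∀ ij kl, nijenhuis L Jmₗ (stdBasis S (Fin 2) (Fin 2) ij)
      (stdBasis S (Fin 2) (Fin 2) kl) = 0 := by
    rintro ⟨i, j⟩ ⟨k, l⟩
    rw [stdBasis_eq_single, stdBasis_eq_single]
    exact nijenhuis_sb hL i j k l
  obtain ⟨-, hadd, -, -, hskew, hleib, -⟩ := hL
  exact ⟨Jm_Jm, nijenhuis_eq_zero_of_basis (stdBasis S (Fin 2) (Fin 2)) (fun X f => anchor X f)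
    hadd hskew hleib Jm_Jm hgen⟩
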